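/- arXiv:1009.4922 — 4 statements merged into one kernel-verified Lean document; each statement's English description precedes it below -/
import Mathlib

section
/- If f : D → D is holomorphic and z ≠ ζ in D, then |(1 − f(z)·conj(f(ζ)))/(1 − z·conj(ζ))|² ≤ ((1 − |f(z)|²)/(1 − |z|²)) · ((1 − |f(ζ)|²)/(1 − |ζ|²)). -/
/-!
Let `φ_a(w) = (a - w) / (1 - ā w)`, the involutive automorphism of the disc exchanging `0` and
`a`. Schwarz's lemma applied to `φ_{f z} ∘ f ∘ φ_z`, which fixes `0`, shows that `f` does not
increase the pseudo-hyperbolic distance `|φ_z(ζ)|`. Since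
`1 - |φ_a(w)|² = (1 - |a|²)(1 - |w|²) / |1 - a w̄|²`, this is the claimed inequality after
clearing denominators.
-/

open Metric Set ComplexConjugate

namespace Complex

noncomputable def diskInvolution (a w : ℂ) : ℂ := (a - w) / (1 - conj a * w)

variable {a w : ℂ}

theorem one_sub_sq_norm_pos (hw : ‖w‖ < 1) : 0 < 1 - ‖w‖ ^ 2 :=
  sub_pos.2 (pow_lt_one₀ (norm_nonneg w) hw two_ne_zero)

theorem norm_one_sub_conj_mul (a w : ℂ) : ‖1 - conj a * w‖ = ‖1 - a * conj w‖ := by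
  rw [← norm_conj]
  simp [mul_comm]

theorem norm_one_sub_mul_conj_sq_sub_norm_sub_sq (a w : ℂ) :
    ‖1 - a * conj w‖ ^ 2 - ‖a - w‖ ^ 2 = (1 - ‖a‖ ^ 2) * (1 - ‖w‖ ^ 2) := by
  simp only [Complex.sq_norm, normSq_apply, sub_re, sub_im, mul_re, mul_im, conj_re, conj_im,
    one_re, one_im]
  ring

theorem norm_sub_lt_norm_one_sub_mul_conj (ha : ‖a‖ < 1) (hw : ‖w‖ < 1) :
    ‖a - w‖ < ‖1 - a * conj w‖ := by
  have hid := norm_one_sub_mul_conj_sq_sub_norm_sub_sq a w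
  have hpos := mul_pos (one_sub_sq_norm_pos ha) (one_sub_sq_norm_pos hw)
  exact lt_of_pow_lt_pow_left₀ 2 (norm_nonneg _) (by linarith)

theorem one_sub_mul_conj_ne_zero (ha : ‖a‖ < 1) (hw : ‖w‖ < 1) : 1 - a * conj w ≠ 0 :=
  norm_pos_iff.1 ((norm_nonneg _).trans_lt (norm_sub_lt_norm_one_sub_mul_conj ha hw))

theorem norm_diskInvolution (a w : ℂ) :
    ‖diskInvolution a w‖ = ‖a - w‖ / ‖1 - a * conj w‖ := by
  rw [diskInvolution, norm_div, norm_one_sub_conj_mul]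

theorem norm_diskInvolution_lt_one (ha : ‖a‖ < 1) (hw : ‖w‖ < 1) :
    ‖diskInvolution a w‖ < 1 := by
  rw [norm_diskInvolution, div_lt_one (norm_pos_iff.2 (one_sub_mul_conj_ne_zero ha hw))]
  exact norm_sub_lt_norm_one_sub_mul_conj ha hw

theorem one_sub_norm_diskInvolution_sq (ha : ‖a‖ < 1) (hw : ‖w‖ < 1) :
    1 - ‖diskInvolution a w‖ ^ 2 = (1 - ‖a‖ ^ 2) * (1 - ‖w‖ ^ 2) / ‖1 - a * conj w‖ ^ 2 := by
  have := norm_pos_iff.2 (one_sub_mul_conj_ne_zero ha hw)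
  rw [norm_diskInvolution, div_pow, ← norm_one_sub_mul_conj_sq_sub_norm_sub_sq]
  field_simp

theorem diskInvolution_self (a : ℂ) : diskInvolution a a = 0 := by
  simp [diskInvolution]

theorem diskInvolution_zero (a : ℂ) : diskInvolution a 0 = a := by
  simp [diskInvolution]

theorem diskInvolution_diskInvolution (ha : ‖a‖ < 1) (hw : ‖w‖ < 1) :
    diskInvolution a (diskInvolution a w) = w := by
  have hw' : 1 - w * conj a ≠ 0 := one_sub_mul_conj_ne_zero hw ha
  have hden : 1 - w * conj a - (a - w) * conj a ≠ 0 := by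
    simpa [mul_comm, sub_mul] using one_sub_mul_conj_ne_zero ha ha
  rw [diskInvolution, diskInvolution, mul_comm (conj a), mul_comm (conj a)]
  field_simp
  ring

theorem differentiableOn_diskInvolution (ha : ‖a‖ < 1) :
    DifferentiableOn ℂ (diskInvolution a) (ball 0 1) := by
  refine DifferentiableOn.div (by fun_prop) (by fun_prop) fun w hw => ?_
  simpa [mul_comm] using one_sub_mul_conj_ne_zero (mem_ball_zero_iff.1 hw) ha

theorem mapsTo_diskInvolution (ha : ‖a‖ < 1) :
    MapsTo (diskInvolution a) (ball 0 1) (ball 0 1) := fun _ hw =>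
  mem_ball_zero_iff.2 (norm_diskInvolution_lt_one ha (mem_ball_zero_iff.1 hw))

theorem norm_diskInvolution_le_of_mapsTo_ball {f : ℂ → ℂ} (hf : DifferentiableOn ℂ f (ball 0 1))
    (hmap : MapsTo f (ball 0 1) (ball 0 1)) {z ζ : ℂ} (hz : ‖z‖ < 1) (hζ : ‖ζ‖ < 1) :
    ‖diskInvolution (f z) (f ζ)‖ ≤ ‖diskInvolution z ζ‖ := by
  have hfz : ‖f z‖ < 1 := mem_ball_zero_iff.1 (hmap (mem_ball_zero_iff.2 hz))
  set g := diskInvolution (f z) ∘ f ∘ diskInvolution z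
  have hg : DifferentiableOn ℂ g (ball 0 1) :=
    (differentiableOn_diskInvolution hfz).comp
      (hf.comp (differentiableOn_diskInvolution hz) (mapsTo_diskInvolution hz))
      (hmap.comp (mapsTo_diskInvolution hz))
  have hg_maps : MapsTo g (ball 0 1) (closedBall 0 1) :=
    ((mapsTo_diskInvolution hfz).comp (hmap.comp (mapsTo_diskInvolution hz))).mono_right
      ball_subset_closedBall
  have hg_zero : g 0 = 0 := by
    simp only [g, Function.comp_apply, diskInvolution_zero, diskInvolution_self]
  have hg_apply : g (diskInvolution z ζ) = diskInvolution (f z) (f ζ) := by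
    simp only [g, Function.comp_apply, diskInvolution_diskInvolution hz hζ]
  rw [← hg_apply]
  exact norm_le_norm_of_mapsTo_ball hg hg_maps hg_zero (norm_diskInvolution_lt_one hz hζ)

end Complex

open Complex

theorem schwarz_pick_kernel_bound_general
    (f : ℂ → ℂ)
    (hf : DifferentiableOn ℂ f (ball (0 : ℂ) 1))
    (hmap : MapsTo f (ball (0 : ℂ) 1) (ball (0 : ℂ) 1))
    (z ζ : ℂ) (hz : z ∈ ball (0 : ℂ) 1) (hζ : ζ ∈ ball (0 : ℂ) 1) :
    ‖(1 - f z * (starRingEnd ℂ) (f ζ)) / (1 - z * (starRingEnd ℂ) ζ)‖ ^ 2 ≤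
      ((1 - ‖f z‖ ^ 2) / (1 - ‖z‖ ^ 2)) * ((1 - ‖f ζ‖ ^ 2) / (1 - ‖ζ‖ ^ 2)) := by
  rw [mem_ball_zero_iff] at hz hζ
  have hfz : ‖f z‖ < 1 := mem_ball_zero_iff.1 (hmap (mem_ball_zero_iff.2 hz))
  have hfζ : ‖f ζ‖ < 1 := mem_ball_zero_iff.1 (hmap (mem_ball_zero_iff.2 hζ))
  have hpick : 1 - ‖diskInvolution z ζ‖ ^ 2 ≤ 1 - ‖diskInvolution (f z) (f ζ)‖ ^ 2 := by
    have := norm_diskInvolution_le_of_mapsTo_ball hf hmap hz hζ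
    gcongr
  have hC := norm_pos_iff.2 (one_sub_mul_conj_ne_zero hz hζ)
  have hA := norm_pos_iff.2 (one_sub_mul_conj_ne_zero hfz hfζ)
  rw [one_sub_norm_diskInvolution_sq hz hζ, one_sub_norm_diskInvolution_sq hfz hfζ,
    div_le_div_iff₀ (by positivity) (by positivity)] at hpick
  rw [norm_div, div_pow, div_mul_div_comm, div_le_div_iff₀ (by positivity)
    (mul_pos (one_sub_sq_norm_pos hz) (one_sub_sq_norm_pos hζ))]
  linarith

theorem schwarz_pick_kernel_bound
    (f : ℂ → ℂ)
    (hf : DifferentiableOn ℂ f (ball (0 : ℂ) 1))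
    (hmap : MapsTo f (ball (0 : ℂ) 1) (ball (0 : ℂ) 1))
    (z ζ : ℂ) (hz : z ∈ ball (0 : ℂ) 1) (hζ : ζ ∈ ball (0 : ℂ) 1)
    (hne : z ≠ ζ) :
    ‖(1 - f z * (starRingEnd ℂ) (f ζ)) / (1 - z * (starRingEnd ℂ) ζ)‖ ^ 2 ≤
      ((1 - ‖f z‖ ^ 2) / (1 - ‖z‖ ^ 2)) * ((1 - ‖f ζ‖ ^ 2) / (1 - ‖ζ‖ ^ 2)) :=
  schwarz_pick_kernel_bound_general f hf hmap z ζ hz hζ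
end

section
/- Let p ∈ ℂ[z₁,z₂] have bidegree at most (n,m) and no zeros in D², and let p̃(z₁,z₂) = z₁ⁿ z₂ᵐ · conj(p(1/conj(z₁), 1/conj(z₂))). If there exist polynomials A₁,…,A_n of bidegree at most (n−1,m) and B₁,…,B_m of bidegree at most (n,m−1) with p(z)·conj(p(ζ)) − p̃(z)·conj(p̃(ζ)) = (1 − z₁·conj(ζ₁))·Σⱼ Aⱼ(z)·conj(Aⱼ(ζ)) + (1 − z₂·conj(ζ₂))·Σⱼ Bⱼ(z)·conj(Bⱼ(ζ)) for all z, ζ, then the same identity holds with each Aⱼ replaced by Ãⱼ(z) = z₁^{n−1} z₂^m · conj(Aⱼ(1/conj(z₁),1/conj(z₂))) and each Bⱼ replaced by B̃ⱼ(z) = z₁^n z₂^{m−1} · conj(Bⱼ(1/conj(z₁),1/conj(z₂))). -/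
open Metric Set Finset

/-- The open unit bidisk in `ℂ × ℂ`. -/
def biDisk : Set (ℂ × ℂ) := {z | ‖z.1‖ < 1 ∧ ‖z.2‖ < 1}

/-- The two-variable polynomial with coefficient matrix `c` (bidegree at most
`(a-1, b-1)`), evaluated at `z = (z₁, z₂)`. -/
noncomputable def poly2 {a b : ℕ} (c : Fin a → Fin b → ℂ) (z : ℂ × ℂ) : ℂ :=
  ∑ i : Fin a, ∑ j : Fin b, c i j * z.1 ^ (i : ℕ) * z.2 ^ (j : ℕ)

/-- Coefficient matrix of the reflection `X̃(z) = z₁^(a-1) z₂^(b-1) conj(X(1/z̄₁, 1/z̄₂))`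
of the polynomial with coefficient matrix `c`. -/
noncomputable def refl2 {a b : ℕ} (c : Fin a → Fin b → ℂ) : Fin a → Fin b → ℂ :=
  fun i j => (starRingEnd ℂ) (c i.rev j.rev)

lemma refl2_refl2 {a b : ℕ} (c : Fin a → Fin b → ℂ) : refl2 (refl2 c) = c := by
  funext i j
  simp [refl2, Fin.rev_rev]

lemma poly2_refl_eval {a b : ℕ} (c : Fin a → Fin b → ℂ) {z : ℂ × ℂ}
    (h1 : z.1 ≠ 0) (h2 : z.2 ≠ 0) :
    poly2 (refl2 c) z = z.1 ^ (a - 1) * z.2 ^ (b - 1) *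
      (starRingEnd ℂ) (poly2 c (((starRingEnd ℂ) z.1)⁻¹, ((starRingEnd ℂ) z.2)⁻¹)) := by
  unfold poly2 refl2
  simp only [map_sum, map_mul, map_pow, map_inv₀, Complex.conj_conj, Finset.mul_sum]
  rw [← Fintype.sum_bijective Fin.rev Fin.rev_bijective _ _ (fun i => rfl)]
  refine Finset.sum_congr rfl fun i _ => ?_
  rw [← Fintype.sum_bijective Fin.rev Fin.rev_bijective _ _ (fun j => rfl)]
  refine Finset.sum_congr rfl fun j _ => ?_
  simp only [Fin.rev_rev, Fin.val_rev]
  have hi : (i : ℕ) ≤ a - 1 := Nat.le_sub_one_of_lt i.isLt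
  have hj : (j : ℕ) ≤ b - 1 := Nat.le_sub_one_of_lt j.isLt
  have e1 : a - ((i : ℕ) + 1) = a - 1 - (i : ℕ) := by omega
  have e2 : b - ((j : ℕ) + 1) = b - 1 - (j : ℕ) := by omega
  rw [e1, e2, pow_sub₀ _ h1 hi, pow_sub₀ _ h2 hj]
  ring

@[fun_prop]
lemma continuous_poly2 {a b : ℕ} (c : Fin a → Fin b → ℂ) : Continuous (poly2 c) := by
  unfold poly2
  fun_prop

lemma sos_aux (k : ℕ) (x y S : ℂ) (hx : x ≠ 0) (hy : y ≠ 0) (hS : k = 0 → S = 0) :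
    x ^ k * y ^ k * (1 - x⁻¹ * y⁻¹) * S =
      -((1 - x * y) * (x ^ (k - 1) * y ^ (k - 1)) * S) := by
  cases k with
  | zero => simp [hS rfl]
  | succ l =>
    simp only [Nat.add_sub_cancel]
    field_simp
    ring

/-- Reflection symmetry of sum-of-squares decompositions: equation (2) from equation (1). -/
theorem sos_reflection_symmetry (n m : ℕ)
    (p : Fin (n + 1) → Fin (m + 1) → ℂ)
    (A : Fin n → Fin n → Fin (m + 1) → ℂ)
    (B : Fin m → Fin (n + 1) → Fin m → ℂ)
    (hp : ∀ z ∈ biDisk, poly2 p z ≠ 0)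
    (hsos : ∀ z ζ : ℂ × ℂ,
      poly2 p z * (starRingEnd ℂ) (poly2 p ζ) -
        poly2 (refl2 p) z * (starRingEnd ℂ) (poly2 (refl2 p) ζ) =
      (1 - z.1 * (starRingEnd ℂ) ζ.1) *
          ∑ j : Fin n, poly2 (A j) z * (starRingEnd ℂ) (poly2 (A j) ζ) +
      (1 - z.2 * (starRingEnd ℂ) ζ.2) *
          ∑ j : Fin m, poly2 (B j) z * (starRingEnd ℂ) (poly2 (B j) ζ)) :
    ∀ z ζ : ℂ × ℂ,
      poly2 p z * (starRingEnd ℂ) (poly2 p ζ) -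
        poly2 (refl2 p) z * (starRingEnd ℂ) (poly2 (refl2 p) ζ) =
      (1 - z.1 * (starRingEnd ℂ) ζ.1) *
          ∑ j : Fin n, poly2 (refl2 (A j)) z * (starRingEnd ℂ) (poly2 (refl2 (A j)) ζ) +
      (1 - z.2 * (starRingEnd ℂ) ζ.2) *
          ∑ j : Fin m, poly2 (refl2 (B j)) z * (starRingEnd ℂ) (poly2 (refl2 (B j)) ζ) := by
  -- Step 1: the identity on the dense set where all coordinates are nonzero.
  have key : ∀ z ζ : ℂ × ℂ, z.1 ≠ 0 → z.2 ≠ 0 → ζ.1 ≠ 0 → ζ.2 ≠ 0 →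
      poly2 p z * (starRingEnd ℂ) (poly2 p ζ) -
        poly2 (refl2 p) z * (starRingEnd ℂ) (poly2 (refl2 p) ζ) =
      (1 - z.1 * (starRingEnd ℂ) ζ.1) *
          ∑ j : Fin n, poly2 (refl2 (A j)) z * (starRingEnd ℂ) (poly2 (refl2 (A j)) ζ) +
      (1 - z.2 * (starRingEnd ℂ) ζ.2) *
          ∑ j : Fin m, poly2 (refl2 (B j)) z * (starRingEnd ℂ) (poly2 (refl2 (B j)) ζ) := by
    intro z ζ hz1 hz2 hζ1 hζ2
    have hcz1 : (starRingEnd ℂ) z.1 ≠ 0 := by simpa using hz1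
    have hcz2 : (starRingEnd ℂ) z.2 ≠ 0 := by simpa using hz2
    have hcζ1 : (starRingEnd ℂ) ζ.1 ≠ 0 := by simpa using hζ1
    have hcζ2 : (starRingEnd ℂ) ζ.2 ≠ 0 := by simpa using hζ2
    set w : ℂ × ℂ := (((starRingEnd ℂ) z.1)⁻¹, ((starRingEnd ℂ) z.2)⁻¹) with hw
    set ω : ℂ × ℂ := (((starRingEnd ℂ) ζ.1)⁻¹, ((starRingEnd ℂ) ζ.2)⁻¹) with hω
    -- rewrite the reflected polynomials at z and ζ
    have hQz : poly2 (refl2 p) z = z.1 ^ n * z.2 ^ m * (starRingEnd ℂ) (poly2 p w) := by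
      simpa [Nat.add_sub_cancel] using poly2_refl_eval p hz1 hz2
    have hPz : poly2 p z = z.1 ^ n * z.2 ^ m * (starRingEnd ℂ) (poly2 (refl2 p) w) := by
      have := poly2_refl_eval (refl2 p) hz1 hz2
      rw [refl2_refl2] at this
      simpa [Nat.add_sub_cancel] using this
    have hQζ : poly2 (refl2 p) ζ = ζ.1 ^ n * ζ.2 ^ m * (starRingEnd ℂ) (poly2 p ω) := by
      simpa [Nat.add_sub_cancel] using poly2_refl_eval p hζ1 hζ2
    have hPζ : poly2 p ζ = ζ.1 ^ n * ζ.2 ^ m * (starRingEnd ℂ) (poly2 (refl2 p) ω) := by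
      have := poly2_refl_eval (refl2 p) hζ1 hζ2
      rw [refl2_refl2] at this
      simpa [Nat.add_sub_cancel] using this
    have hQζc : (starRingEnd ℂ) (poly2 (refl2 p) ζ) =
        ((starRingEnd ℂ) ζ.1) ^ n * ((starRingEnd ℂ) ζ.2) ^ m * poly2 p ω := by
      rw [hQζ]; simp [mul_comm, mul_assoc, mul_left_comm]
    have hPζc : (starRingEnd ℂ) (poly2 p ζ) =
        ((starRingEnd ℂ) ζ.1) ^ n * ((starRingEnd ℂ) ζ.2) ^ m * poly2 (refl2 p) ω := by
      rw [hPζ]; simp [mul_comm, mul_assoc, mul_left_comm]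
    -- rewrite the sums
    have hA : (∑ j : Fin n, poly2 (refl2 (A j)) z * (starRingEnd ℂ) (poly2 (refl2 (A j)) ζ)) =
        z.1 ^ (n - 1) * z.2 ^ m * ((starRingEnd ℂ) ζ.1) ^ (n - 1) * ((starRingEnd ℂ) ζ.2) ^ m *
          ∑ j : Fin n, (starRingEnd ℂ) (poly2 (A j) w) * poly2 (A j) ω := by
      rw [Finset.mul_sum]
      refine Finset.sum_congr rfl fun j _ => ?_
      have h1 : poly2 (refl2 (A j)) z =
          z.1 ^ (n - 1) * z.2 ^ m * (starRingEnd ℂ) (poly2 (A j) w) := by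
        simpa [Nat.add_sub_cancel] using poly2_refl_eval (A j) hz1 hz2
      have h2 : poly2 (refl2 (A j)) ζ =
          ζ.1 ^ (n - 1) * ζ.2 ^ m * (starRingEnd ℂ) (poly2 (A j) ω) := by
        simpa [Nat.add_sub_cancel] using poly2_refl_eval (A j) hζ1 hζ2
      rw [h1, h2]
      simp only [map_mul, map_pow, Complex.conj_conj]
      ring
    have hB : (∑ j : Fin m, poly2 (refl2 (B j)) z * (starRingEnd ℂ) (poly2 (refl2 (B j)) ζ)) =
        z.1 ^ n * z.2 ^ (m - 1) * ((starRingEnd ℂ) ζ.1) ^ n * ((starRingEnd ℂ) ζ.2) ^ (m - 1) *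
          ∑ j : Fin m, (starRingEnd ℂ) (poly2 (B j) w) * poly2 (B j) ω := by
      rw [Finset.mul_sum]
      refine Finset.sum_congr rfl fun j _ => ?_
      have h1 : poly2 (refl2 (B j)) z =
          z.1 ^ n * z.2 ^ (m - 1) * (starRingEnd ℂ) (poly2 (B j) w) := by
        simpa [Nat.add_sub_cancel] using poly2_refl_eval (B j) hz1 hz2
      have h2 : poly2 (refl2 (B j)) ζ =
          ζ.1 ^ n * ζ.2 ^ (m - 1) * (starRingEnd ℂ) (poly2 (B j) ω) := by
        simpa [Nat.add_sub_cancel] using poly2_refl_eval (B j) hζ1 hζ2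
      rw [h1, h2]
      simp only [map_mul, map_pow, Complex.conj_conj]
      ring
    -- conjugate of the hypothesis at (w, ω)
    have H := congrArg (starRingEnd ℂ) (hsos w ω)
    simp only [map_sub, map_add, map_mul, map_sum, map_one, map_inv₀,
      Complex.conj_conj, hw, hω] at H
    have hCSA0 : n = 0 →
        (∑ j : Fin n, (starRingEnd ℂ) (poly2 (A j) w) * poly2 (A j) ω) = 0 := by
      intro h; subst h; simp
    have hCSB0 : m = 0 →
        (∑ j : Fin m, (starRingEnd ℂ) (poly2 (B j) w) * poly2 (B j) ω) = 0 := by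
      intro h; subst h; simp
    have hAux1 := sos_aux n z.1 ((starRingEnd ℂ) ζ.1)
      (∑ j : Fin n, (starRingEnd ℂ) (poly2 (A j) w) * poly2 (A j) ω) hz1 hcζ1 hCSA0
    have hAux2 := sos_aux m z.2 ((starRingEnd ℂ) ζ.2)
      (∑ j : Fin m, (starRingEnd ℂ) (poly2 (B j) w) * poly2 (B j) ω) hz2 hcζ2 hCSB0
    rw [hQz, hPz, hQζc, hPζc, hA, hB]
    linear_combination
      (-(z.1 ^ n * z.2 ^ m * ((starRingEnd ℂ) ζ.1) ^ n * ((starRingEnd ℂ) ζ.2) ^ m)) * H -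
      (z.2 ^ m * ((starRingEnd ℂ) ζ.2) ^ m) * hAux1 -
      (z.1 ^ n * ((starRingEnd ℂ) ζ.1) ^ n) * hAux2
  -- Step 2: extend by continuity.
  intro z ζ
  let F : (ℂ × ℂ) × (ℂ × ℂ) → ℂ := fun q =>
    poly2 p q.1 * (starRingEnd ℂ) (poly2 p q.2) -
      poly2 (refl2 p) q.1 * (starRingEnd ℂ) (poly2 (refl2 p) q.2)
  let G : (ℂ × ℂ) × (ℂ × ℂ) → ℂ := fun q =>
    (1 - q.1.1 * (starRingEnd ℂ) q.2.1) *
        ∑ j : Fin n, poly2 (refl2 (A j)) q.1 * (starRingEnd ℂ) (poly2 (refl2 (A j)) q.2) +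
    (1 - q.1.2 * (starRingEnd ℂ) q.2.2) *
        ∑ j : Fin m, poly2 (refl2 (B j)) q.1 * (starRingEnd ℂ) (poly2 (refl2 (B j)) q.2)
  have hF : Continuous F := by
    unfold F
    simp only [starRingEnd_apply]
    fun_prop
  have hG : Continuous G := by
    unfold G
    simp only [starRingEnd_apply]
    fun_prop
  have hd : Dense ((({(0:ℂ)}ᶜ ×ˢ {(0:ℂ)}ᶜ) ×ˢ ({(0:ℂ)}ᶜ ×ˢ {(0:ℂ)}ᶜ)) :
      Set ((ℂ × ℂ) × (ℂ × ℂ))) :=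
    (((dense_compl_singleton _).prod (dense_compl_singleton _)).prod
      ((dense_compl_singleton _).prod (dense_compl_singleton _)))
  have hFG : F = G := by
    refine Continuous.ext_on hd hF hG ?_
    rintro ⟨⟨z1, z2⟩, ⟨ζ1, ζ2⟩⟩ ⟨⟨h1, h2⟩, ⟨h3, h4⟩⟩
    exact key (z1, z2) (ζ1, ζ2) h1 h2 h3 h4
  exact congrFun hFG (z, ζ)
end

section
/- Let f : D^{n+1} → D be holomorphic, let φ be a holomorphic automorphism of the unit disk D, and suppose there exists z₀ ∈ Dⁿ such that f(z₀, w) = φ(w) for all w ∈ D. Then f(z,w) = φ(w) for all (z,w) ∈ D^{n+1}. -/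
open Metric Set

/-- The open unit polydisk in `ℂⁿ`. -/
def polyDisk (n : ℕ) : Set (Fin n → ℂ) := {z | ∀ i, ‖z i‖ < 1}

/-- `φ` is a holomorphic automorphism of the unit disk. -/
def IsDiskAut (φ : ℂ → ℂ) : Prop :=
  DifferentiableOn ℂ φ (ball (0 : ℂ) 1) ∧
  MapsTo φ (ball (0 : ℂ) 1) (ball (0 : ℂ) 1) ∧
  ∃ ψ : ℂ → ℂ, DifferentiableOn ℂ ψ (ball (0 : ℂ) 1) ∧
    MapsTo ψ (ball (0 : ℂ) 1) (ball (0 : ℂ) 1) ∧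
    (∀ w ∈ ball (0 : ℂ) 1, ψ (φ w) = w) ∧
    (∀ w ∈ ball (0 : ℂ) 1, φ (ψ w) = w)

open Complex Filter ComplexConjugate Topology

/-!
Composing with the inverse automorphism reduces the statement to `φ = id`. Restricted to the
complex line through `z₀` and `z`, the map becomes a holomorphic family `H t` of self-maps of the
disk with `H 0 = id`. The derivative `V t = (H t)' 0` is holomorphic in `t` (a locally uniform
limit of difference quotients), satisfies `‖V t‖ ≤ 1` by Schwarz–Pick, and `V 0 = 1`; by the
maximum modulus principle `V ≡ 1`, and the equality case of Schwarz–Pick makes every `H t` the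
identity.
-/

noncomputable def diskMobius (a ζ : ℂ) : ℂ := (ζ - a) / (1 - conj a * ζ)

section DiskMobius

variable {a : ℂ}

lemma one_sub_conj_mul_ne_zero (ha : ‖a‖ < 1) {ζ : ℂ} (hζ : ‖ζ‖ < 1) : 1 - conj a * ζ ≠ 0 := by
  refine sub_ne_zero.2 fun h => ?_
  have : ‖conj a * ζ‖ < 1 := by
    rw [norm_mul, RCLike.norm_conj]
    exact mul_lt_one_of_nonneg_of_lt_one_left (norm_nonneg a) ha hζ.le
  simp [← h] at this

lemma normSq_one_sub_conj_mul_sub_normSq_sub (a ζ : ℂ) :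
    normSq (1 - conj a * ζ) - normSq (ζ - a) = (1 - normSq a) * (1 - normSq ζ) := by
  simp only [normSq_apply, sub_re, sub_im, mul_re, mul_im, one_re, one_im, conj_re, conj_im]
  ring

lemma mapsTo_diskMobius (ha : ‖a‖ < 1) : MapsTo (diskMobius a) (ball 0 1) (ball 0 1) := by
  intro ζ hζ
  rw [mem_ball_zero_iff] at hζ ⊢
  have hden := one_sub_conj_mul_ne_zero ha hζ
  rw [diskMobius, norm_div, div_lt_one (norm_pos_iff.2 hden),
    ← pow_lt_pow_iff_left₀ (norm_nonneg _) (norm_nonneg _) two_ne_zero, Complex.sq_norm,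
    Complex.sq_norm, ← sub_pos, normSq_one_sub_conj_mul_sub_normSq_sub, ← Complex.sq_norm,
    ← Complex.sq_norm]
  have h1 : ‖a‖ ^ 2 < 1 := pow_lt_one₀ (norm_nonneg a) ha two_ne_zero
  have h2 : ‖ζ‖ ^ 2 < 1 := pow_lt_one₀ (norm_nonneg ζ) hζ two_ne_zero
  exact mul_pos (sub_pos.2 h1) (sub_pos.2 h2)

lemma differentiableOn_diskMobius (ha : ‖a‖ < 1) :
    DifferentiableOn ℂ (diskMobius a) (ball 0 1) :=
  (differentiableOn_id.sub_const a).div ((differentiableOn_const 1).sub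
    (differentiableOn_id.const_mul _)) fun _ hζ =>
    one_sub_conj_mul_ne_zero ha (mem_ball_zero_iff.1 hζ)

lemma diskMobius_self (a : ℂ) : diskMobius a a = 0 := by
  simp [diskMobius]

lemma hasDerivAt_diskMobius_self (ha : ‖a‖ < 1) :
    HasDerivAt (diskMobius a) (1 - (‖a‖ : ℂ) ^ 2)⁻¹ a := by
  have hden := one_sub_conj_mul_ne_zero ha ha
  rw [conj_mul'] at hden
  have := ((hasDerivAt_id' a).sub_const a).div
    (((hasDerivAt_id' a).const_mul (conj a)).const_sub 1) (by rwa [conj_mul'])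
  refine this.congr_deriv ?_
  rw [sub_self, zero_mul, sub_zero, one_mul, conj_mul', sq (1 - _), div_mul_cancel_right₀ hden]

end DiskMobius

/-- Schwarz–Pick lemma at the origin. -/
theorem norm_deriv_le_one_sub_sq {g : ℂ → ℂ} (hd : DifferentiableOn ℂ g (ball 0 1))
    (hm : MapsTo g (ball 0 1) (ball 0 1)) : ‖deriv g 0‖ ≤ 1 - ‖g 0‖ ^ 2 := by
  have ha : ‖g 0‖ < 1 := mem_ball_zero_iff.1 (hm (mem_ball_self one_pos))
  have hpos : 0 < 1 - ‖g 0‖ ^ 2 := sub_pos.2 (pow_lt_one₀ (norm_nonneg _) ha two_ne_zero)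
  have hB := (differentiableOn_diskMobius ha).comp hd hm
  have hBm := (mapsTo_diskMobius ha).comp hm
  have hB0 : (diskMobius (g 0) ∘ g) 0 = 0 := diskMobius_self _
  have hschwarz := norm_deriv_le_one_of_mapsTo_ball hB
    (by rw [hB0]; exact hBm.mono_right ball_subset_closedBall) one_pos
  have hchain : HasDerivAt (diskMobius (g 0) ∘ g) ((1 - (‖g 0‖ : ℂ) ^ 2)⁻¹ * deriv g 0) 0 :=
    (hasDerivAt_diskMobius_self ha).comp 0
      (hd.differentiableAt (ball_mem_nhds 0 one_pos)).hasDerivAt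
  rwa [hchain.deriv, norm_mul, norm_inv, ← ofReal_pow, ← ofReal_one, ← ofReal_sub, norm_real,
    Real.norm_of_nonneg hpos.le, inv_mul_le_iff₀ hpos, mul_one] at hschwarz

theorem eqOn_deriv_mul_of_norm_deriv_eq_one {g : ℂ → ℂ} (hd : DifferentiableOn ℂ g (ball 0 1))
    (hm : MapsTo g (ball 0 1) (ball 0 1)) (h1 : ‖deriv g 0‖ = 1) :
    EqOn g (fun w => deriv g 0 * w) (ball 0 1) := by
  have hg0 : g 0 = 0 := by
    have := norm_deriv_le_one_sub_sq hd hm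
    rw [h1] at this
    exact norm_eq_zero.1 (pow_eq_zero_iff two_ne_zero |>.1
      (le_antisymm (by linarith) (sq_nonneg _)))
  have hm' : MapsTo g (ball 0 1) (closedBall (g 0) 1) := by
    rw [hg0]; exact hm.mono_right ball_subset_closedBall
  intro w hw
  simpa [hg0, mul_comm] using
    affine_of_mapsTo_ball_of_norm_dslope_eq_div hd hm' (mem_ball_self one_pos)
      (by rwa [dslope_same, div_one]) hw

theorem norm_dslope_sub_deriv_le {g : ℂ → ℂ} (hd : DifferentiableOn ℂ g (ball 0 1))
    (hm : MapsTo g (ball 0 1) (ball 0 1)) {w : ℂ} (hw : w ∈ ball (0 : ℂ) 1) :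
    ‖dslope g 0 w - deriv g 0‖ ≤ 4 * ‖w‖ := by
  have hu : DifferentiableOn ℂ (dslope g 0) (ball 0 1) :=
    (differentiableOn_dslope (ball_mem_nhds 0 one_pos)).2 hd
  have hg2 : MapsTo g (ball 0 1) (closedBall (g 0) 2) := fun x hx =>
    (dist_le_norm_add_norm _ _).trans (add_le_add (mem_ball_zero_iff.1 (hm hx)).le
      (mem_ball_zero_iff.1 (hm (mem_ball_self one_pos))).le |>.trans_eq one_add_one_eq_two)
  have hu2 : ∀ x ∈ ball (0 : ℂ) 1, ‖dslope g 0 x‖ ≤ 2 := fun x hx => by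
    simpa using norm_dslope_le_div_of_mapsTo_ball hd hg2 hx
  have hu4 : MapsTo (dslope g 0) (ball 0 1) (closedBall (dslope g 0 0) 4) := fun x hx =>
    (dist_le_norm_add_norm _ _).trans (by linarith [hu2 x hx, hu2 0 (mem_ball_self one_pos)])
  simpa [dist_eq_norm] using dist_le_div_mul_dist_of_mapsTo_ball hu hu4 hw

theorem differentiableOn_deriv_zero_of_mapsTo_ball {T : Set ℂ} (hT : IsOpen T)
    {H : ℂ → ℂ → ℂ} (hd : ∀ t ∈ T, DifferentiableOn ℂ (H t) (ball 0 1))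
    (hm : ∀ t ∈ T, MapsTo (H t) (ball 0 1) (ball 0 1))
    (hdt : ∀ w ∈ ball (0 : ℂ) 1, DifferentiableOn ℂ (fun t => H t w) T) :
    DifferentiableOn ℂ (fun t => deriv (H t) 0) T := by
  -- Schwarz's lemma applied to `dslope` makes the convergence uniform in the parameter.
  have hlim : TendstoUniformlyOn (fun w t => dslope (H t) 0 w) (fun t => deriv (H t) 0)
      (𝓝[≠] 0) T := by
    refine Metric.tendstoUniformlyOn_iff.2 fun ε hε => ?_
    filter_upwards [nhdsWithin_le_nhds (ball_mem_nhds 0 (lt_min one_pos (by positivity :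
      0 < ε / 4)))] with w hw t ht
    rw [mem_ball_zero_iff, lt_min_iff] at hw
    rw [dist_comm, dist_eq_norm]
    linarith [norm_dslope_sub_deriv_le (hd t ht) (hm t ht) (mem_ball_zero_iff.2 hw.1)]
  refine hlim.tendstoLocallyUniformlyOn.differentiableOn ?_ hT
  filter_upwards [self_mem_nhdsWithin, nhdsWithin_le_nhds (ball_mem_nhds 0 one_pos)]
    with w (hw0 : w ≠ 0) hw
  simp only [dslope_of_ne _ hw0, slope_def_field, sub_zero]
  exact ((hdt w hw).sub (hdt 0 (mem_ball_self one_pos))).div_const w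

theorem eq_self_of_holomorphic_family {T : Set ℂ} (hT : IsOpen T) (hTc : IsPreconnected T)
    {c : ℂ} (hc : c ∈ T) {H : ℂ → ℂ → ℂ} (hd : ∀ t ∈ T, DifferentiableOn ℂ (H t) (ball 0 1))
    (hm : ∀ t ∈ T, MapsTo (H t) (ball 0 1) (ball 0 1))
    (hdt : ∀ w ∈ ball (0 : ℂ) 1, DifferentiableOn ℂ (fun t => H t w) T)
    (hid : ∀ w ∈ ball (0 : ℂ) 1, H c w = w) {t : ℂ} (ht : t ∈ T) {w : ℂ}
    (hw : w ∈ ball (0 : ℂ) 1) : H t w = w := by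
  have hc1 : deriv (H c) 0 = 1 := by
    rw [Filter.EventuallyEq.deriv_eq (f := id) (eventually_of_mem (ball_mem_nhds 0 one_pos) hid),
      deriv_id]
  have hmax : IsMaxOn (norm ∘ fun t => deriv (H t) 0) T c := fun s hs => by
    simpa [hc1] using (norm_deriv_le_one_sub_sq (hd s hs) (hm s hs)).trans
      (sub_le_self _ (sq_nonneg _))
  have ht1 : deriv (H t) 0 = 1 := by
    simpa [hc1] using Complex.eqOn_of_isPreconnected_of_isMaxOn_norm hTc hT
      (differentiableOn_deriv_zero_of_mapsTo_ball hT hd hm hdt) hc hmax ht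
  simpa [ht1] using eqOn_deriv_mul_of_norm_deriv_eq_one (hd t ht) (hm t ht) (by simp [ht1]) hw

theorem eq_snd_of_eq_snd_on_slice {E : Type*} [NormedAddCommGroup E] [NormedSpace ℂ E]
    {U : Set E} (hUo : IsOpen U) (hUc : Convex ℝ U) {h : E × ℂ → ℂ}
    (hd : DifferentiableOn ℂ h (U ×ˢ ball 0 1)) (hm : MapsTo h (U ×ˢ ball 0 1) (ball 0 1))
    {z₀ : E} (hz₀ : z₀ ∈ U) (hslice : ∀ w ∈ ball (0 : ℂ) 1, h (z₀, w) = w) {z : E} (hz : z ∈ U)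
    {w : ℂ} (hw : w ∈ ball (0 : ℂ) 1) : h (z, w) = w := by
  let γ : ℂ → E := fun t => z₀ + t • (z - z₀)
  have hγ : Differentiable ℂ γ := by fun_prop
  have hTc : Convex ℝ (γ ⁻¹' U) := (hUc.translate_preimage_right z₀).linear_preimage
    ((LinearMap.toSpanSingleton ℂ E (z - z₀)).restrictScalars ℝ)
  have hmem : ∀ t ∈ γ ⁻¹' U, ∀ w ∈ ball (0 : ℂ) 1, (γ t, w) ∈ U ×ˢ ball 0 1 :=
    fun t ht w hw => ⟨ht, hw⟩
  simpa [γ] using eq_self_of_holomorphic_family (hUo.preimage hγ.continuous)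
    hTc.isPreconnected (c := 0) (by simpa [γ]) (H := fun t w => h (γ t, w))
    (fun t ht => hd.comp (by fun_prop) (hmem t ht))
    (fun t ht w hw => hm (hmem t ht w hw))
    (fun w hw => hd.comp (by fun_prop) fun t ht => hmem t ht w hw)
    (fun w hw => by simpa [γ] using hslice w hw) (t := 1) (by simpa [γ]) hw

theorem polyDisk_eq_pi (n : ℕ) : polyDisk n = univ.pi fun _ => ball 0 1 := by
  ext z
  simp [polyDisk]

theorem isOpen_polyDisk (n : ℕ) : IsOpen (polyDisk n) :=
  polyDisk_eq_pi n ▸ isOpen_set_pi finite_univ fun _ _ => isOpen_ball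

theorem convex_polyDisk (n : ℕ) : Convex ℝ (polyDisk n) :=
  polyDisk_eq_pi n ▸ convex_pi fun _ _ => convex_ball 0 1

/-- If a holomorphic map of the polydisk into the disk agrees with a disk automorphism in
the last variable on one slice, it does so everywhere. -/
theorem slice_automorphism_propagates (n : ℕ)
    (f : (Fin n → ℂ) × ℂ → ℂ)
    (hf : DifferentiableOn ℂ f (polyDisk n ×ˢ ball (0 : ℂ) 1))
    (hmap : MapsTo f (polyDisk n ×ˢ ball (0 : ℂ) 1) (ball (0 : ℂ) 1))
    (φ : ℂ → ℂ) (hφ : IsDiskAut φ)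
    (z₀ : Fin n → ℂ) (hz₀ : z₀ ∈ polyDisk n)
    (hslice : ∀ w ∈ ball (0 : ℂ) 1, f (z₀, w) = φ w) :
    ∀ z ∈ polyDisk n, ∀ w ∈ ball (0 : ℂ) 1, f (z, w) = φ w := by
  obtain ⟨-, -, ψ, hψd, hψm, hψφ, hφψ⟩ := hφ
  intro z hz w hw
  have hψf : ψ (f (z, w)) = w :=
    eq_snd_of_eq_snd_on_slice (isOpen_polyDisk n) (convex_polyDisk n) (hψd.comp hf hmap)
      (hψm.comp hmap) hz₀
      (fun w hw => by simp only [Function.comp_apply, hslice w hw, hψφ w hw]) hz hw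
  rw [← hφψ _ (hmap ⟨hz, hw⟩), hψf]
end

section
/- Let f : D² → D be holomorphic with f(0, w) = w for all w ∈ D. Then for all (z,w) ∈ D², |w − f(z,w)|² ≤ (1 − |w|²)/(1 − |z|²). -/
/-!
Fix `w` and apply the Schwarz–Pick lemma to the slice `g = f(·, w)`, for which `g 0 = w`:
the pseudo-hyperbolic distance `‖g z - w‖ / ‖1 - conj w * g z‖` is at most `‖z‖`.
Combined with the identity `‖1 - conj w * a‖² - ‖a - w‖² = (1 - ‖a‖²)(1 - ‖w‖²)` this gives
`‖a - w‖² (1 - ‖z‖²) ≤ ‖z‖² (1 - ‖a‖²)(1 - ‖w‖²) ≤ 1 - ‖w‖²` for `a = g z`.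
-/

open Metric Set ComplexConjugate

namespace Complex

lemma norm_one_sub_conj_mul_sq_sub_norm_sub_sq (u v : ℂ) :
    ‖1 - conj v * u‖ ^ 2 - ‖u - v‖ ^ 2 = (1 - ‖u‖ ^ 2) * (1 - ‖v‖ ^ 2) := by
  simp only [← normSq_eq_norm_sq, normSq_apply, sub_re, sub_im, mul_re, mul_im, conj_re,
    conj_im, one_re, one_im]
  ring

lemma norm_sub_lt_norm_one_sub_conj_mul {u v : ℂ} (hu : ‖u‖ < 1) (hv : ‖v‖ < 1) :
    ‖u - v‖ < ‖1 - conj v * u‖ := by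
  have hpos : 0 < (1 - ‖u‖ ^ 2) * (1 - ‖v‖ ^ 2) := by
    apply mul_pos <;> nlinarith [norm_nonneg u, norm_nonneg v]
  have := norm_one_sub_conj_mul_sq_sub_norm_sub_sq u v
  exact lt_of_pow_lt_pow_left₀ 2 (norm_nonneg _) (by linarith)

lemma one_sub_conj_mul_ne_zero {u v : ℂ} (hu : ‖u‖ < 1) (hv : ‖v‖ < 1) :
    1 - conj v * u ≠ 0 :=
  norm_pos_iff.mp <| (norm_nonneg _).trans_lt (norm_sub_lt_norm_one_sub_conj_mul hu hv)

noncomputable def diskMoebius (v u : ℂ) : ℂ := (u - v) / (1 - conj v * u)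

lemma diskMoebius_self (v : ℂ) : diskMoebius v v = 0 := by
  simp [diskMoebius]

lemma mapsTo_diskMoebius {v : ℂ} (hv : v ∈ ball (0 : ℂ) 1) :
    MapsTo (diskMoebius v) (ball 0 1) (ball 0 1) := by
  intro u hu
  rw [mem_ball_zero_iff] at hu hv ⊢
  have hlt := norm_sub_lt_norm_one_sub_conj_mul hu hv
  rw [diskMoebius, norm_div]
  exact (div_lt_one ((norm_nonneg _).trans_lt hlt)).mpr hlt

lemma differentiableOn_diskMoebius {v : ℂ} (hv : v ∈ ball (0 : ℂ) 1) :
    DifferentiableOn ℂ (diskMoebius v) (ball 0 1) := by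
  refine DifferentiableOn.div (by fun_prop) (by fun_prop) fun u hu ↦ ?_
  exact one_sub_conj_mul_ne_zero (mem_ball_zero_iff.mp hu) (mem_ball_zero_iff.mp hv)

/-- The **Schwarz–Pick lemma** at the origin. -/
theorem norm_sub_le_mul_norm_one_sub_conj_mul_of_mapsTo_ball {g : ℂ → ℂ}
    (hd : DifferentiableOn ℂ g (ball 0 1)) (hmaps : MapsTo g (ball 0 1) (ball 0 1))
    {z : ℂ} (hz : z ∈ ball (0 : ℂ) 1) :
    ‖g z - g 0‖ ≤ ‖z‖ * ‖1 - conj (g 0) * g z‖ := by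
  have hg0 : g 0 ∈ ball (0 : ℂ) 1 := hmaps (mem_ball_self one_pos)
  have hschwarz : ‖diskMoebius (g 0) (g z)‖ ≤ ‖z‖ :=
    norm_le_norm_of_mapsTo_ball ((differentiableOn_diskMoebius hg0).comp hd hmaps)
      (((mapsTo_diskMoebius hg0).comp hmaps).mono_right ball_subset_closedBall)
      (diskMoebius_self _) (mem_ball_zero_iff.mp hz)
  have hne := one_sub_conj_mul_ne_zero (mem_ball_zero_iff.mp (hmaps hz))
    (mem_ball_zero_iff.mp hg0)
  rwa [diskMoebius, norm_div, div_le_iff₀ (norm_pos_iff.mpr hne)] at hschwarz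

lemma norm_sub_sq_le_div_of_le_mul_norm_one_sub_conj_mul {a w z : ℂ} (ha : ‖a‖ ≤ 1)
    (hw : ‖w‖ ≤ 1) (hz : ‖z‖ < 1) (h : ‖a - w‖ ≤ ‖z‖ * ‖1 - conj w * a‖) :
    ‖w - a‖ ^ 2 ≤ (1 - ‖w‖ ^ 2) / (1 - ‖z‖ ^ 2) := by
  have hid := norm_one_sub_conj_mul_sq_sub_norm_sub_sq a w
  have hsq : ‖a - w‖ ^ 2 ≤ ‖z‖ ^ 2 * ‖1 - conj w * a‖ ^ 2 := by
    rw [← mul_pow]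
    exact pow_le_pow_left₀ (norm_nonneg _) h 2
  have hz2 : ‖z‖ ^ 2 < 1 := by nlinarith [norm_nonneg z]
  have ha2 : 0 ≤ 1 - ‖a‖ ^ 2 := by nlinarith [norm_nonneg a]
  have hw2 : 0 ≤ 1 - ‖w‖ ^ 2 := by nlinarith [norm_nonneg w]
  rw [norm_sub_rev, le_div_iff₀ (by linarith)]
  calc ‖a - w‖ ^ 2 * (1 - ‖z‖ ^ 2) ≤ ‖z‖ ^ 2 * ((1 - ‖a‖ ^ 2) * (1 - ‖w‖ ^ 2)) := by
        nlinarith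
    _ ≤ 1 * (1 * (1 - ‖w‖ ^ 2)) := by
        gcongr
        linarith [sq_nonneg ‖a‖]
    _ = 1 - ‖w‖ ^ 2 := by ring

end Complex

open Complex

theorem fixed_slice_quantitative_estimate
    (f : ℂ × ℂ → ℂ)
    (hf : DifferentiableOn ℂ f (ball (0 : ℂ) 1 ×ˢ ball (0 : ℂ) 1))
    (hmap : MapsTo f (ball (0 : ℂ) 1 ×ˢ ball (0 : ℂ) 1) (ball (0 : ℂ) 1))
    (hslice : ∀ w ∈ ball (0 : ℂ) 1, f (0, w) = w) :
    ∀ z ∈ ball (0 : ℂ) 1, ∀ w ∈ ball (0 : ℂ) 1,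
      ‖w - f (z, w)‖ ^ 2 ≤ (1 - ‖w‖ ^ 2) / (1 - ‖z‖ ^ 2) := by
  intro z hz w hw
  have hpair : MapsTo (fun x : ℂ ↦ (x, w)) (ball 0 1) (ball 0 1 ×ˢ ball 0 1) :=
    fun x hx ↦ ⟨hx, hw⟩
  have hpick := norm_sub_le_mul_norm_one_sub_conj_mul_of_mapsTo_ball
    (hf.comp (by fun_prop) hpair) (hmap.comp hpair) hz
  simp only [Function.comp_apply, hslice w hw] at hpick
  exact norm_sub_sq_le_div_of_le_mul_norm_one_sub_conj_mul
    (mem_ball_zero_iff.mp (hmap (hpair hz))).le (mem_ball_zero_iff.mp hw).le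
    (mem_ball_zero_iff.mp hz) hpick
end
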